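/- arXiv:math/0612652 — 6 statements merged into one kernel-verified Lean document; each statement's English description precedes it below -/
import Mathlib

section
/- In a Noetherian poset (no bounded infinite strictly increasing sequence) in which any two elements having a common upper bound have a least upper bound, every nonempty subset that is bounded above has a least upper bound. -/
/-- In a Noetherian poset (no bounded infinite strictly increasing sequence) in which any two
elements having a common upper bound have a least upper bound, every nonempty subset that is
bounded above has a least upper bound. -/
theorem stmt0 {E : Type*} [PartialOrder E]
    (hNoeth : ¬ ∃ f : ℕ → E, StrictMono f ∧ ∃ b, ∀ n, f n ≤ b)
    (hlub : ∀ a b : E, (∃ c, a ≤ c ∧ b ≤ c) → ∃ l, IsLUB {a, b} l) :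
    ∀ S : Set E, S.Nonempty → BddAbove S → ∃ l, IsLUB S l := by
  intro S hS hBdd
  obtain ⟨b, hb⟩ := hBdd
  obtain ⟨s0, hs0⟩ := hS
  -- A : elements that are LUBs of subsets of S
  set A : Set E := {x | ∃ F : Set E, F ⊆ S ∧ IsLUB F x} with hAdef
  have hAb : ∀ x ∈ A, x ≤ b := by
    rintro x ⟨F, hFS, hF⟩
    exact hF.2 fun y hy => hb (hFS hy)
  have hmemA : ∀ s ∈ S, s ∈ A := fun s hs =>
    ⟨{s}, by simpa using hs, isLUB_singleton⟩
  have hs0A : s0 ∈ A := hmemA s0 hs0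
  -- A has a maximal element
  have hmax : ∃ m ∈ A, ∀ x ∈ A, ¬ m < x := by
    by_contra h
    push_neg at h
    choose g hg1 hg2 using h
    let G : {x // x ∈ A} → {x // x ∈ A} := fun x => ⟨g x.1 x.2, hg1 x.1 x.2⟩
    let f : ℕ → E := fun n => (G^[n] ⟨s0, hs0A⟩).1
    have hmono : StrictMono f := by
      apply strictMono_nat_of_lt_succ
      intro n
      have : G^[n+1] ⟨s0, hs0A⟩ = G (G^[n] ⟨s0, hs0A⟩) :=
        Function.iterate_succ_apply' G n _
      show f n < (G^[n+1] ⟨s0, hs0A⟩).1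
      rw [this]
      exact hg2 _ (G^[n] ⟨s0, hs0A⟩).2
    exact hNoeth ⟨f, hmono, b, fun n => hAb _ (G^[n] ⟨s0, hs0A⟩).2⟩
  obtain ⟨m, hmA, hmMax⟩ := hmax
  obtain ⟨Fm, hFmS, hFm⟩ := hmA
  -- m is an upper bound of S
  have hub : ∀ s ∈ S, s ≤ m := by
    intro s hs
    obtain ⟨l, hl⟩ := hlub s m ⟨b, hb hs, hAb m ⟨Fm, hFmS, hFm⟩⟩
    have hsl : s ≤ l := hl.1 (by simp)
    have hml : m ≤ l := hl.1 (by simp)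
    have hlA : l ∈ A := by
      refine ⟨insert s Fm, ?_, ?_, ?_⟩
      · exact Set.insert_subset hs hFmS
      · rintro y (rfl | hy)
        · exact hsl
        · exact le_trans (hFm.1 hy) hml
      · intro u hu
        have hsu : s ≤ u := hu (Set.mem_insert _ _)
        have hmu : m ≤ u := hFm.2 fun y hy => hu (Set.mem_insert_of_mem _ hy)
        exact hl.2 (by rintro y (rfl | rfl) <;> assumption)
    have : m = l := by
      by_contra hne
      exact hmMax l hlA (lt_of_le_of_ne hml hne)
    exact this ▸ hsl
  refine ⟨m, hub, fun u hu => hFm.2 fun y hy => hu (hFmS hy)⟩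
end

section
/- In a Noetherian poset with a minimal element, in which any two elements having a common upper bound have a least upper bound, every nonempty family of elements has a greatest lower bound. -/
/-- In a Noetherian poset with a minimal (bottom) element, in which any two elements having a
common upper bound have a least upper bound, every nonempty family of elements has a greatest
lower bound. -/
theorem stmt1 {E : Type*} [PartialOrder E]
    (hNoeth : ¬ ∃ f : ℕ → E, StrictMono f ∧ ∃ b, ∀ n, f n ≤ b)
    (bot : E) (hbot : ∀ x, bot ≤ x)
    (hlub : ∀ a b : E, (∃ c, a ≤ c ∧ b ≤ c) → ∃ l, IsLUB {a, b} l) :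
    ∀ S : Set E, S.Nonempty → ∃ g, IsGLB S g := by
  intro S hS
  obtain ⟨s₀, hs₀⟩ := hS
  set L : Set E := lowerBounds S with hL
  have hbotL : bot ∈ L := fun s _ => hbot s
  -- L has a maximal element
  by_cases hmax : ∃ g ∈ L, ∀ x ∈ L, g ≤ x → x = g
  · obtain ⟨g, hgL, hgmax⟩ := hmax
    refine ⟨g, hgL, ?_⟩
    intro x hxL
    -- take lub of g and x
    obtain ⟨l, hl⟩ := hlub g x ⟨s₀, hgL hs₀, hxL hs₀⟩
    have hlL : l ∈ L := by
      intro s hs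
      exact hl.2 (by
        intro y hy
        rcases hy with rfl | rfl
        · exact hgL hs
        · exact hxL hs)
    have hgl : g ≤ l := hl.1 (Set.mem_insert _ _)
    have := hgmax l hlL hgl
    subst this
    exact hl.1 (Set.mem_insert_of_mem _ rfl)
  · exfalso
    push_neg at hmax
    -- build strictly increasing sequence in L, all ≤ s₀
    have step : ∀ x : L, ∃ y : L, (x : E) < y := by
      rintro ⟨x, hx⟩
      obtain ⟨y, hyL, hyle, hne⟩ := hmax x hx
      exact ⟨⟨y, hyL⟩, lt_of_le_of_ne hyle (fun h => hne h.symm)⟩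
    choose st hst using step
    let f : ℕ → L := fun n => st^[n] ⟨bot, hbotL⟩
    have hmono : StrictMono fun n => (f n : E) := by
      apply strictMono_nat_of_lt_succ
      intro n
      have : f (n + 1) = st (f n) := Function.iterate_succ_apply' st n _
      rw [this]
      exact hst (f n)
    exact hNoeth ⟨_, hmono, s₀, fun n => (f n).2 hs₀⟩
end

section
/- Let M be a left-cancellative monoid, P a generating set, and X a set of elements of M such that: (1) X is closed under left factors; (2) X with left divisibility is a Noetherian poset bounded above by some element of M; (3) whenever x ∈ X, y, z ∈ P, and xy, xz ∈ X, then y and z have a common right multiple m with xm ∈ X. Then X equals the set of left divisors of some element g of M. -/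
/-!
Noetherianity gives an element `g ∈ X` with no proper right multiple in `X`. It then suffices
that any two elements of `X` have a common right multiple in `X`, since that multiple must be
`g`. This common-multiple property is proved at every `x ∈ X` (for complements `a`, `b` with
`x * a, x * b ∈ X`) by Noetherian induction on `x`: writing `a = p * a'` and `b = q * b'` with
`p, q ∈ P \ {1}`, the local hypothesis gives `p * u = q * v` with `x * p * u ∈ X`; the induction
hypothesis at `x * p` (a proper multiple of `x` by left cancellation) closes `a'` and `u` by some `a' * s = u * w`, and then at `x * q` closes
`b'` and `v * w`.
-/

section

variable {M : Type*} [Monoid M]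

def StrictMultipleIn (X : Set M) (y x : M) : Prop := y ∈ X ∧ x ∣ y ∧ x ≠ y

theorem wellFounded_strictMultipleIn {X : Set M}
    (h : ¬ ∃ f : ℕ → M, (∀ n, f n ∈ X) ∧ ∀ n, f n ∣ f (n + 1) ∧ f n ≠ f (n + 1)) :
    WellFounded (StrictMultipleIn X) :=
  wellFounded_iff_isEmpty_descending_chain.mpr
    ⟨fun ⟨f, hf⟩ => h ⟨fun n => f (n + 1), fun n => (hf n).1, fun n => (hf (n + 1)).2⟩⟩

theorem Submonoid.eq_one_or_exists_mem_ne_one_mul_of_closure_eq_top {P : Set M}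
    (hgen : Submonoid.closure P = ⊤) (a : M) : a = 1 ∨ ∃ p ∈ P, p ≠ 1 ∧ ∃ a', a = p * a' := by
  induction a using Submonoid.induction_of_closure_eq_top_left hgen with
  | one => exact .inl rfl
  | mul_left p hp a ih =>
    by_cases hp1 : p = 1
    · simpa [hp1] using ih
    · exact .inr ⟨p, hp, hp1, a, rfl⟩

theorem exists_common_multiple_mul_mem [IsLeftCancelMul M] {P X : Set M}
    (hgen : Submonoid.closure P = ⊤) (hfac : ∀ x z : M, x * z ∈ X → x ∈ X)
    (hwf : WellFounded (StrictMultipleIn X))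
    (hmul : ∀ x ∈ X, ∀ y ∈ P, ∀ z ∈ P, x * y ∈ X → x * z ∈ X → ∃ m, y ∣ m ∧ z ∣ m ∧ x * m ∈ X)
    {x a b : M} (ha : x * a ∈ X) (hb : x * b ∈ X) : ∃ m, a ∣ m ∧ b ∣ m ∧ x * m ∈ X := by
  induction x using hwf.induction generalizing a b with
  | _ x ih =>
  rcases Submonoid.eq_one_or_exists_mem_ne_one_mul_of_closure_eq_top hgen a with
    rfl | ⟨p, hp, hp1, a', rfl⟩
  · exact ⟨b, one_dvd b, dvd_rfl, hb⟩
  rcases Submonoid.eq_one_or_exists_mem_ne_one_mul_of_closure_eq_top hgen b with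
    rfl | ⟨q, hq, hq1, b', rfl⟩
  · exact ⟨p * a', dvd_rfl, one_dvd _, ha⟩
  rw [← mul_assoc] at ha hb
  have hxp : x * p ∈ X := hfac _ _ ha
  have hxq : x * q ∈ X := hfac _ _ hb
  obtain ⟨_, ⟨u, rfl⟩, ⟨v, hv⟩, hpu⟩ := hmul x (hfac _ _ hxp) p hp q hq hxp hxq
  obtain ⟨_, ⟨s, rfl⟩, ⟨w, hw⟩, hpas⟩ :=
    ih (x * p) ⟨hxp, dvd_mul_right x p, (mul_ne_left.mpr hp1).symm⟩ ha (b := u)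
      (by rwa [mul_assoc])
  have hqvw : x * q * (v * w) ∈ X := by
    rwa [← mul_assoc, mul_assoc x, ← hv, mul_assoc, mul_assoc, ← hw, ← mul_assoc]
  obtain ⟨_, ⟨s₂, rfl⟩, ⟨w₂, hw₂⟩, hqbs⟩ :=
    ih (x * q) ⟨hxq, dvd_mul_right x q, (mul_ne_left.mpr hq1).symm⟩ hb hqvw
  refine ⟨q * (b' * s₂), ⟨s * w₂, ?_⟩, mul_dvd_mul_left q (dvd_mul_right b' s₂), by
    rwa [← mul_assoc]⟩
  calc q * (b' * s₂) = q * v * w * w₂ := by rw [hw₂]; simp only [mul_assoc]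
    _ = p * (a' * s) * w₂ := by rw [← hv, hw]; simp only [mul_assoc]
    _ = p * a' * (s * w₂) := by simp only [mul_assoc]

end

theorem stmt3_general {M : Type*} [Monoid M]
    (hcancel : ∀ a b c : M, a * b = a * c → b = c)
    (P X : Set M) (hgen : Submonoid.closure P = ⊤)
    (hne : X.Nonempty)
    (hfac : ∀ x z : M, x * z ∈ X → x ∈ X)
    (hNoeth : ¬ ∃ f : ℕ → M, (∀ n, f n ∈ X) ∧
      ∀ n, (∃ z, f (n + 1) = f n * z) ∧ f n ≠ f (n + 1))
    (hmul : ∀ x ∈ X, ∀ y ∈ P, ∀ z ∈ P, x * y ∈ X → x * z ∈ X →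
      ∃ m : M, (∃ u, m = y * u) ∧ (∃ u, m = z * u) ∧ x * m ∈ X) :
    ∃ g : M, X = {x : M | ∃ z, g = x * z} := by
  have : IsLeftCancelMul M := ⟨fun a _ _ => hcancel a _ _⟩
  have hwf : WellFounded (StrictMultipleIn X) := wellFounded_strictMultipleIn hNoeth
  obtain ⟨g, hg, hgmax⟩ := hwf.has_min X hne
  refine ⟨g, Set.ext fun x => ⟨fun hx => ?_, fun ⟨z, hz⟩ => hfac x z (hz ▸ hg)⟩⟩
  obtain ⟨_, hxm, ⟨v, rfl⟩, hgv⟩ := exists_common_multiple_mul_mem hgen hfac hwf hmul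
    (x := 1) (a := x) (b := g) (by rwa [one_mul]) (by rwa [one_mul])
  rw [one_mul] at hgv
  have hv : g = g * v := by_contra fun h => hgmax _ hgv ⟨hgv, dvd_mul_right g v, h⟩
  rwa [← hv] at hxm

/-- Lemma 1.4 of the paper, in the monoid case: if `M` is a left-cancellative monoid generated by
`P`, and `X` is a nonempty set of elements of `M` which is stable by taking left factors, is
bounded above and Noetherian for left divisibility, and such that whenever `x ∈ X`, `y, z ∈ P`
with `x*y, x*z ∈ X` then `y` and `z` have a common right multiple `m` with `x*m ∈ X`, then `X`
is the set of left divisors of some element `g` of `M`. -/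
theorem stmt3 {M : Type*} [Monoid M]
    (hcancel : ∀ a b c : M, a * b = a * c → b = c)
    (P X : Set M) (hgen : Submonoid.closure P = ⊤)
    (hne : X.Nonempty)
    (hfac : ∀ x z : M, x * z ∈ X → x ∈ X)
    (hbdd : ∃ b : M, ∀ x ∈ X, ∃ z, b = x * z)
    (hNoeth : ¬ ∃ f : ℕ → M, (∀ n, f n ∈ X) ∧
      ∀ n, (∃ z, f (n + 1) = f n * z) ∧ f n ≠ f (n + 1))
    (hmul : ∀ x ∈ X, ∀ y ∈ P, ∀ z ∈ P, x * y ∈ X → x * z ∈ X →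
      ∃ m : M, (∃ u, m = y * u) ∧ (∃ u, m = z * u) ∧ x * m ∈ X) :
    ∃ g : M, X = {x : M | ∃ z, g = x * z} :=
  stmt3_general hcancel P X hgen hne hfac hNoeth hmul
end

section
/- Let M be a monoid with left cancellation that is left Noetherian, and suppose two elements having a common right multiple always have a right lcm. If a left-cancellative submonoid M₁ of M is stable by complement (x, y ∈ M₁ and x left-divides y in M implies the complement z with y = xz lies in M₁) and stable by lcm (the right lcm in M of two elements of M₁ having a common right multiple in M₁ lies in M₁), then M₁ also satisfies: it is left Noetherian, left-cancellative, and any two elements of M₁ with a common right multiple in M₁ have a right lcm in M₁. -/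
/-- `x` left-divides `y` with complement in `S`. -/
def DvdIn {M : Type*} [Monoid M] (S : Set M) (x y : M) : Prop := ∃ z ∈ S, y = x * z

/-- If `M` is a left locally Garside monoid (left Noetherian, left-cancellative, right lcms of
elements admitting a common right multiple exist) and `M₁` is a submonoid stable by complement
and by lcm, then `M₁` is again left Noetherian, left-cancellative, and any two of its elements
with a common right multiple in `M₁` have a right lcm in `M₁`. -/
theorem stmt4 {M : Type*} [Monoid M] (M₁ : Submonoid M)
    (hcancel : ∀ a b c : M, a * b = a * c → b = c)
    (hNoeth : ¬ ∃ f : ℕ → M, (∀ n, DvdIn Set.univ (f n) (f (n + 1)) ∧ f n ≠ f (n + 1)) ∧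
      ∃ b, ∀ n, DvdIn Set.univ (f n) b)
    (hlcm : ∀ x y : M, (∃ m, DvdIn Set.univ x m ∧ DvdIn Set.univ y m) →
      ∃ l, DvdIn Set.univ x l ∧ DvdIn Set.univ y l ∧
        ∀ m, DvdIn Set.univ x m → DvdIn Set.univ y m → DvdIn Set.univ l m)
    (hcompl : ∀ x ∈ M₁, ∀ y ∈ M₁, ∀ z : M, y = x * z → z ∈ M₁)
    (hstab : ∀ x ∈ M₁, ∀ y ∈ M₁, ∀ l : M,
      (∃ m ∈ M₁, DvdIn Set.univ x m ∧ DvdIn Set.univ y m) →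
      (DvdIn Set.univ x l ∧ DvdIn Set.univ y l ∧
        ∀ m, DvdIn Set.univ x m → DvdIn Set.univ y m → DvdIn Set.univ l m) → l ∈ M₁) :
    (¬ ∃ f : ℕ → M, (∀ n, f n ∈ M₁) ∧
        (∀ n, DvdIn (M₁ : Set M) (f n) (f (n + 1)) ∧ f n ≠ f (n + 1)) ∧
        ∃ b ∈ M₁, ∀ n, DvdIn (M₁ : Set M) (f n) b) ∧
    (∀ x ∈ M₁, ∀ y ∈ M₁, ∀ z ∈ M₁, x * y = x * z → y = z) ∧
    (∀ x ∈ M₁, ∀ y ∈ M₁, (∃ m ∈ M₁, DvdIn (M₁ : Set M) x m ∧ DvdIn (M₁ : Set M) y m) →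
      ∃ l ∈ M₁, DvdIn (M₁ : Set M) x l ∧ DvdIn (M₁ : Set M) y l ∧
        ∀ m ∈ M₁, DvdIn (M₁ : Set M) x m → DvdIn (M₁ : Set M) y m →
          DvdIn (M₁ : Set M) l m) := by
  have weaken : ∀ x y : M, DvdIn (M₁ : Set M) x y → DvdIn Set.univ x y := by
    rintro x y ⟨z, _, hz⟩
    exact ⟨z, Set.mem_univ z, hz⟩
  refine ⟨?_, ?_, ?_⟩
  · rintro ⟨f, _, hchain, b, _, hb⟩
    exact hNoeth ⟨f, fun n => ⟨weaken _ _ (hchain n).1, (hchain n).2⟩,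
      b, fun n => weaken _ _ (hb n)⟩
  · intro x _ y _ z _ h
    exact hcancel x y z h
  · rintro x hx y hy ⟨m, hm, hxm, hym⟩
    obtain ⟨l, hxl, hyl, hmin⟩ :=
      hlcm x y ⟨m, weaken _ _ hxm, weaken _ _ hym⟩
    have hlM : l ∈ M₁ :=
      hstab x hx y hy l ⟨m, hm, weaken _ _ hxm, weaken _ _ hym⟩ ⟨hxl, hyl, hmin⟩
    obtain ⟨zx, _, hzx⟩ := hxl
    obtain ⟨zy, _, hzy⟩ := hyl
    refine ⟨l, hlM, ⟨zx, hcompl x hx l hlM zx hzx, hzx⟩,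
      ⟨zy, hcompl y hy l hlM zy hzy, hzy⟩, ?_⟩
    intro m' hm' hxm' hym'
    obtain ⟨z, _, hz⟩ := hmin m' (weaken _ _ hxm') (weaken _ _ hym')
    exact ⟨z, hcompl l hlM m' hm' z hz, hz⟩
end

section
/- There is a left- and right-Noetherian commutative monoid without atoms and failing cancellation: on the set {x_i : i ∈ ℤ_{≥0}} ∪ {x_∞} with product x_i x_j = x_{min(i,j)} (where x_∞ is the identity), every nonidentity element x_i satisfies x_i = x_i x_i, so no element is a product of atoms and the monoid is not atomic. -/
/-- The monoid `{x_i : i ∈ ℤ≥0} ∪ {x_∞}` of the paper is `WithTop ℕ` under `min`,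
with `⊤ = x_∞` as identity. -/
abbrev MinMonoidCarrier := WithTop ℕ

/-- The product: term-wise multiplication of the binary sequences, i.e. `min`. -/
def mm (a b : MinMonoidCarrier) : MinMonoidCarrier := min a b

/-- Left divisibility for `mm`. -/
def divL (x y : MinMonoidCarrier) : Prop := ∃ z, y = mm x z

/-- Right divisibility for `mm`. -/
def divR (x y : MinMonoidCarrier) : Prop := ∃ z, y = mm z x

/-- `a` is an atom: a nonidentity element with no proper factorization. -/
def IsAtomMin (a : MinMonoidCarrier) : Prop :=
  a ≠ ⊤ ∧ ∀ u v, a = mm u v → u = ⊤ ∨ v = ⊤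

/-- Being a (possibly empty) product of atoms. -/
inductive ProdAtomsMin : MinMonoidCarrier → Prop
  | one : ProdAtomsMin ⊤
  | cons (a b : MinMonoidCarrier) : IsAtomMin a → ProdAtomsMin b → ProdAtomsMin (mm a b)

/-! The product is `min`, so `x` divides `y` (on either side) exactly when `y ≤ x`: a strictly
increasing divisibility chain is a strictly decreasing sequence in the well-order `WithTop ℕ`,
which cannot exist. Every element is idempotent, so each `x ≠ ⊤` has the proper factorization
`x = x · x` and there are no atoms; a product of atoms is then necessarily the empty product `⊤`. -/

theorem top_mm (a : MinMonoidCarrier) : mm ⊤ a = a := min_eq_right le_top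

theorem mm_top (a : MinMonoidCarrier) : mm a ⊤ = a := min_eq_left le_top

theorem mm_assoc (a b c : MinMonoidCarrier) : mm (mm a b) c = mm a (mm b c) := min_assoc a b c

theorem mm_comm (a b : MinMonoidCarrier) : mm a b = mm b a := min_comm a b

theorem mm_self (a : MinMonoidCarrier) : mm a a = a := min_self a

theorem divL_iff_le {x y : MinMonoidCarrier} : divL x y ↔ y ≤ x :=
  ⟨fun ⟨z, hz⟩ => hz ▸ min_le_left x z, fun h => ⟨y, (min_eq_right h).symm⟩⟩

theorem divR_iff_le {x y : MinMonoidCarrier} : divR x y ↔ y ≤ x := by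
  simp only [divR, mm_comm _ x]
  exact divL_iff_le

theorem not_exists_strict_chain_of_iff_le {dvd : MinMonoidCarrier → MinMonoidCarrier → Prop}
    (hdvd : ∀ x y, dvd x y ↔ y ≤ x) :
    ¬ ∃ f : ℕ → MinMonoidCarrier, ∀ n, dvd (f n) (f (n + 1)) ∧ f n ≠ f (n + 1) := by
  rintro ⟨f, hf⟩
  obtain ⟨n, hn⟩ := WellFounded.not_rel_apply_succ (r := (· < ·)) f
  exact hn (((hdvd _ _).1 (hf n).1).lt_of_ne (hf n).2.symm)

theorem not_isAtomMin (a : MinMonoidCarrier) : ¬ IsAtomMin a := fun ⟨hne, hsplit⟩ =>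
  (hsplit a a (mm_self a).symm).elim hne hne

theorem eq_top_of_prodAtomsMin {x : MinMonoidCarrier} (hx : ProdAtomsMin x) : x = ⊤ := by
  cases hx with
  | one => rfl
  | cons a _ ha _ => exact (not_isAtomMin a ha).elim

theorem not_mm_left_cancel : ∃ a b c : MinMonoidCarrier, mm a b = mm a c ∧ b ≠ c :=
  ⟨0, 1, 2, rfl, by decide⟩

/-- The set `{x_i} ∪ {x_∞}` with `x_i x_j = x_{min(i,j)}` and identity `x_∞` is a commutative
monoid, is left and right Noetherian, every nonidentity element `x` satisfies `x·x = x`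
(so there are no atoms and the monoid is not atomic), and cancellation fails. -/
theorem stmt17 :
    (∀ a : MinMonoidCarrier, mm ⊤ a = a ∧ mm a ⊤ = a) ∧
    (∀ a b c : MinMonoidCarrier, mm (mm a b) c = mm a (mm b c)) ∧
    (∀ a b : MinMonoidCarrier, mm a b = mm b a) ∧
    (¬ ∃ f : ℕ → MinMonoidCarrier,
      (∀ n, divL (f n) (f (n + 1)) ∧ f n ≠ f (n + 1)) ∧ ∃ b, ∀ n, divL (f n) b) ∧
    (¬ ∃ f : ℕ → MinMonoidCarrier,
      (∀ n, divR (f n) (f (n + 1)) ∧ f n ≠ f (n + 1)) ∧ ∃ b, ∀ n, divR (f n) b) ∧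
    (∀ x : MinMonoidCarrier, x ≠ ⊤ → mm x x = x) ∧
    (∃ a b c : MinMonoidCarrier, mm a b = mm a c ∧ b ≠ c) ∧
    (∀ x : MinMonoidCarrier, x ≠ ⊤ → ¬ ProdAtomsMin x) := by
  refine ⟨fun a => ⟨top_mm a, mm_top a⟩, mm_assoc, mm_comm, ?_, ?_, fun x _ => mm_self x,
    not_mm_left_cancel, fun x hx hp => hx (eq_top_of_prodAtomsMin hp)⟩
  · rintro ⟨f, hf, -⟩
    exact not_exists_strict_chain_of_iff_le (fun _ _ => divL_iff_le) ⟨f, hf⟩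
  · rintro ⟨f, hf, -⟩
    exact not_exists_strict_chain_of_iff_le (fun _ _ => divR_iff_le) ⟨f, hf⟩
end

section
/- Let f : X → Y be an order-preserving map between posets with Y connected, such that for every y ∈ Y the subposet f⁻¹(Y_{≥ y}) is nonempty and connected. Then the induced map f* : Π₁(X, x₀) → Π₁(Y, f(x₀)) on fundamental groups (of the order complexes) is surjective. If moreover each f⁻¹(Y_{≥ y}) is simply connected, then f* is an isomorphism. -/
namespace PosetHtpy

variable {E : Type*}

/-- Two elements are comparable. -/
def Comp [Preorder E] (a b : E) : Prop := a ≤ b ∨ b ≤ a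

/-- `l` is a path from `a` to `b` in the poset: consecutive elements are comparable. -/
def IsPath [Preorder E] (l : List E) (a b : E) : Prop :=
  l.head? = some a ∧ l.getLast? = some b ∧ l.Chain' Comp

/-- Homotopy of paths in a poset: the finest equivalence relation compatible with
concatenation generated by `xyz ∼ xz` for `x ≤ y ≤ z` (and its reverse) and `xyx ∼ x`,
`yxy ∼ y` for comparable `x`, `y`. -/
inductive Htpy [Preorder E] : List E → List E → Prop
  | refl (l : List E) : Htpy l l
  | symm {l m : List E} : Htpy l m → Htpy m l
  | trans {l m n : List E} : Htpy l m → Htpy m n → Htpy l n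
  | up (p q : List E) (x y z : E) : x ≤ y → y ≤ z →
      Htpy (p ++ x :: y :: z :: q) (p ++ x :: z :: q)
  | down (p q : List E) (x y z : E) : z ≤ y → y ≤ x →
      Htpy (p ++ x :: y :: z :: q) (p ++ x :: z :: q)
  | backforth (p q : List E) (x y : E) : Comp x y →
      Htpy (p ++ x :: y :: x :: q) (p ++ x :: q)

/-- A poset is connected: any two elements are joined by a path. -/
def Connected (E : Type*) [Preorder E] : Prop := ∀ a b : E, ∃ l : List E, IsPath l a b

/-- A poset is simply connected: connected, and every loop is homotopic to a constant path
(i.e. the fundamental group at any base point is trivial). -/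
def SimplyConnected (E : Type*) [Preorder E] : Prop :=
  Connected E ∧ ∀ (x : E) (l : List E), IsPath l x x → Htpy l [x]


/-! A path `y₀ … yₙ` of `Y` is lifted by choosing points `xᵢ` with `yᵢ ≤ f xᵢ` and joining
consecutive ones inside the connected fibre `f⁻¹(Y_{≥ m})` over the smaller `m` of `yᵢ, yᵢ₊₁`.
Each fibre segment maps into the cone `Y_{≥ m}` and collapses onto `m`, so the image of a lift is
homotopic to the path itself: this gives surjectivity. Every elementary homotopy replaces a
subpath by another one inside a cone `Y_{≥ m}`; lifts of such subpaths lie in the fibre over `m`,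
so when the fibres are simply connected, lifts of homotopic paths are homotopic. As a loop of `X`
is a lift of its own image, this gives injectivity. -/

section Paths

variable {E F : Type*} [Preorder E] [Preorder F] {l m p q L L' : List E} {a a' b c w₁ w₂ : E}

theorem Comp.symm (h : Comp a b) : Comp b a := Or.symm h

theorem Comp.map {g : E → F} (hg : Monotone g) (h : Comp a b) : Comp (g a) (g b) :=
  h.imp (@hg _ _) (@hg _ _)

theorem Comp.exists_isLeast (h : Comp a b) : ∃ m, IsLeast {a, b} m :=
  h.elim (fun h => ⟨a, by simp, by simp [h]⟩) (fun h => ⟨b, by simp, by simp [h]⟩)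

theorem isPath_iff : IsPath l a b ↔ l.head? = some a ∧ l.getLast? = some b ∧ l.IsChain Comp :=
  Iff.rfl

theorem isPath_singleton (a : E) : IsPath [a] a a := by simp [isPath_iff]

theorem isPath_append_cons_iff :
    IsPath (l ++ b :: m) a c ↔ IsPath (l ++ [b]) a b ∧ IsPath (b :: m) b c := by
  rw [isPath_iff, isPath_iff, isPath_iff, List.isChain_split]
  simp only [List.head?_append, List.head?_cons, List.getLast?_append, List.getLast?_singleton]
  tauto

theorem IsPath.ne_nil (h : IsPath l a b) : l ≠ [] := by
  rintro rfl; simp [isPath_iff] at h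

theorem IsPath.eq_cons (h : IsPath l a b) : l = a :: l.tail := by
  obtain ⟨x, t, rfl⟩ := List.exists_cons_of_ne_nil h.ne_nil
  simp_all [isPath_iff]

theorem IsPath.head_eq (h : IsPath (c :: l) a b) : c = a := by
  simpa using (isPath_iff.1 h).1

theorem IsPath.tail (h : IsPath (c :: b :: l) a a') : IsPath (b :: l) b a' :=
  (isPath_append_cons_iff (l := [c]).1 h).2

theorem IsPath.comp (h : IsPath (c :: b :: l) a a') : Comp c b :=
  (List.isChain_cons_cons.1 (isPath_iff.1 h).2.2).1

theorem IsPath.eq_dropLast_append (h : IsPath l a b) : l = l.dropLast ++ [b] := by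
  have := List.dropLast_append_getLast h.ne_nil
  rw [List.getLast_eq_iff_getLast?_eq_some _ |>.2 (isPath_iff.1 h).2.1] at this
  exact this.symm

theorem IsPath.cons (hab : Comp a b) (hl : IsPath l b c) : IsPath (a :: l) a c := by
  obtain ⟨t, rfl⟩ : ∃ t, l = b :: t := ⟨l.tail, hl.eq_cons⟩
  simp_all [isPath_iff]

theorem IsPath.append_tail_eq (hl : IsPath l a b) (hm : IsPath m b c) :
    l ++ m.tail = l.dropLast ++ m := by
  conv_lhs => rw [hl.eq_dropLast_append]
  conv_rhs => rw [hm.eq_cons]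
  simp

theorem IsPath.append (hl : IsPath l a b) (hm : IsPath m b c) : IsPath (l ++ m.tail) a c := by
  have hl' : IsPath (l.dropLast ++ [b]) a b := hl.eq_dropLast_append ▸ hl
  have hm' : IsPath (b :: m.tail) b c := hm.eq_cons ▸ hm
  rw [hl.append_tail_eq hm, hm.eq_cons]
  exact isPath_append_cons_iff.2 ⟨hl', hm'⟩

theorem IsPath.reverse (h : IsPath l a b) : IsPath l.reverse b a := by
  obtain ⟨hh, hl, hc⟩ := isPath_iff.1 h
  exact isPath_iff.2 ⟨by simpa, by simpa, List.isChain_reverse.2 (hc.imp fun _ _ => Comp.symm)⟩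

theorem IsPath.map {g : E → F} (hg : Monotone g) (h : IsPath l a b) :
    IsPath (l.map g) (g a) (g b) := by
  obtain ⟨hh, hl, hc⟩ := isPath_iff.1 h
  refine isPath_iff.2 ⟨by simp [hh], by simp [hl], List.isChain_map _ |>.2 ?_⟩
  exact hc.imp fun _ _ => Comp.map hg

theorem IsPath.replace (h : IsPath (p ++ L ++ q) a b) (hL : IsPath L w₁ w₂)
    (hL' : IsPath L' w₁ w₂) : IsPath (p ++ L' ++ q) a b := by
  obtain ⟨hh, hl, hc⟩ := isPath_iff.1 h
  obtain ⟨hLh, hLl, hLc⟩ := isPath_iff.1 hL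
  obtain ⟨hLh', hLl', hLc'⟩ := isPath_iff.1 hL'
  refine isPath_iff.2 ⟨?_, ?_, ?_⟩
  · simpa [List.head?_append, hLh, hLh'] using hh
  · simpa [List.getLast?_append, hLl, hLl'] using hl
  · simpa only [List.append_assoc, List.isChain_append, List.head?_append, List.getLast?_append,
      hLh, hLh', hLl, hLl', hLc, hLc'] using hc

end Paths

section Homotopy

variable {E F : Type*} [Preorder E] [Preorder F] {l l' : List E} {a b y : E}

instance : Trans (@Htpy E _) (@Htpy E _) (@Htpy E _) := ⟨Htpy.trans⟩

theorem Htpy.append_append (h : Htpy l l') (p q : List E) : Htpy (p ++ l ++ q) (p ++ l' ++ q) := by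
  induction h with
  | refl => exact .refl _
  | symm _ ih => exact ih.symm
  | trans _ _ ih₁ ih₂ => exact ih₁.trans ih₂
  | up p' q' x y z hxy hyz => simpa using Htpy.up (p ++ p') (q' ++ q) x y z hxy hyz
  | down p' q' x y z hzy hyx => simpa using Htpy.down (p ++ p') (q' ++ q) x y z hzy hyx
  | backforth p' q' x y hxy => simpa using Htpy.backforth (p ++ p') (q' ++ q) x y hxy

theorem Htpy.append_left (h : Htpy l l') (p : List E) : Htpy (p ++ l) (p ++ l') := by
  simpa using h.append_append p []

theorem Htpy.append_right (h : Htpy l l') (q : List E) : Htpy (l ++ q) (l' ++ q) := by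
  simpa using h.append_append [] q

theorem Htpy.map {g : E → F} (hg : Monotone g) (h : Htpy l l') : Htpy (l.map g) (l'.map g) := by
  induction h with
  | refl => exact .refl _
  | symm _ ih => exact ih.symm
  | trans _ _ ih₁ ih₂ => exact ih₁.trans ih₂
  | up p q x y z hxy hyz => simpa using Htpy.up (p.map g) (q.map g) _ _ _ (hg hxy) (hg hyz)
  | down p q x y z hzy hyx => simpa using Htpy.down (p.map g) (q.map g) _ _ _ (hg hzy) (hg hyx)
  | backforth p q x y hxy =>
    simpa using Htpy.backforth (p.map g) (q.map g) _ _ (hxy.map hg)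

theorem htpy_dup (p q : List E) (a : E) : Htpy (p ++ a :: a :: q) (p ++ a :: q) :=
  (Htpy.up p q a a a le_rfl le_rfl).symm.trans (Htpy.backforth p q a a (Or.inl le_rfl))

theorem IsPath.htpy_cons_append (h : IsPath l a b) : Htpy (a :: (l ++ [b])) l := by
  have hstart : Htpy (a :: (l ++ [b])) (l ++ [b]) := by
    rw [h.eq_cons]; simpa using htpy_dup [] (l.tail ++ [b]) a
  have hend : Htpy (l ++ [b]) l := by
    rw [h.eq_dropLast_append]; simpa using htpy_dup l.dropLast [] b
  exact hstart.trans hend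

theorem htpy_insert_lowerBound (p q : List E) {u v : E} (huv : Comp u v) (hu : y ≤ u)
    (hv : y ≤ v) : Htpy (p ++ u :: v :: q) (p ++ u :: y :: v :: q) := by
  rcases huv with huv | hvu
  · have h₁ := Htpy.up (p ++ [u]) q y u v hu huv
    have h₂ := Htpy.backforth p (v :: q) u y (Or.inr hu)
    simp only [List.append_assoc, List.cons_append, List.nil_append] at h₁ h₂
    exact h₂.symm.trans h₁
  · have h₁ := Htpy.down p (v :: q) u v y hv hvu
    have h₂ := Htpy.backforth (p ++ [u]) q v y (Or.inr hv)
    simp only [List.append_assoc, List.cons_append, List.nil_append] at h₁ h₂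
    exact (h₁.symm.trans h₂).symm

theorem IsPath.htpy_of_forall_le (h : IsPath l a b) (hy : ∀ z ∈ l, y ≤ z) : Htpy l [a, y, b] := by
  induction l generalizing a with
  | nil => exact absurd rfl h.ne_nil
  | cons c l ih =>
    obtain rfl := h.head_eq
    rcases l with _ | ⟨c', l⟩
    · obtain rfl : c = b := by simpa [isPath_iff] using h
      exact (Htpy.backforth [] [] c y (Or.inr (hy c (by simp)))).symm
    · have h₁ := (ih h.tail fun z hz => hy z (by simp [hz])).append_left [c]
      have h₂ := htpy_insert_lowerBound [] [y, b] h.comp (hy c (by simp)) (hy c' (by simp))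
      have h₃ := Htpy.backforth [c] [b] y c' (Or.inl (hy c' (by simp)))
      simp only [List.cons_append, List.nil_append] at h₁ h₂ h₃
      exact h₁.trans (h₂.trans h₃)

theorem IsPath.htpy_append_reverse (h : IsPath l a b) : Htpy (l ++ l.reverse.tail) [a] := by
  induction l generalizing a with
  | nil => exact absurd rfl h.ne_nil
  | cons c l ih =>
    obtain rfl := h.head_eq
    rcases l with _ | ⟨c', l⟩
    · exact .refl _
    · have h₁ := (ih h.tail).append_append [c] [c]
      have h₂ := Htpy.backforth [] [] c c' h.comp
      have e : (c :: c' :: l) ++ (c :: c' :: l).reverse.tail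
          = [c] ++ ((c' :: l) ++ (c' :: l).reverse.tail) ++ [c] := by
        rcases e : l.reverse with _ | ⟨t, L⟩ <;> simp [e]
      rw [e]
      simp only [List.cons_append, List.nil_append] at h₁ h₂ ⊢
      exact h₁.trans h₂

theorem SimplyConnected.htpy (hE : SimplyConnected E) (h : IsPath l a b) (h' : IsPath l' a b) :
    Htpy l l' := by
  have hloop : Htpy (l ++ l'.reverse.tail) [a] := hE.2 a _ (h.append h'.reverse)
  have hback : Htpy (l'.reverse ++ l'.tail) [b] := by
    simpa using h'.reverse.htpy_append_reverse
  calc l = l.dropLast ++ [b] := h.eq_dropLast_append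
    Htpy _ (l.dropLast ++ (l'.reverse ++ l'.tail)) := hback.symm.append_left _
    _ = (l ++ l'.reverse.tail) ++ l'.tail := by
        rw [← List.append_assoc, ← h.append_tail_eq h'.reverse]
    Htpy _ ([a] ++ l'.tail) := hloop.append_right _
    _ = l' := h'.eq_cons.symm

end Homotopy

section Subtype

variable {E : Type*} [Preorder E] {P : E → Prop} {l l' : List E} {a b : E}

theorem Connected.exists_isPath_of_subtype (hP : Connected {x // P x}) (ha : P a) (hb : P b) :
    ∃ l, IsPath l a b ∧ ∀ z ∈ l, P z := by
  obtain ⟨l, hl⟩ := hP ⟨a, ha⟩ ⟨b, hb⟩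
  exact ⟨l.map Subtype.val, hl.map (Subtype.mono_coe P), by simp_all⟩

theorem IsPath.of_map_val {L : List {x // P x}} {a b : {x // P x}}
    (h : IsPath (L.map Subtype.val) a b) : IsPath L a b := by
  obtain ⟨hh, hl, hc⟩ := isPath_iff.1 h
  refine isPath_iff.2 ⟨?_, ?_, (List.isChain_map Subtype.val).1 hc⟩
  · rw [List.head?_map] at hh
    exact Option.map_injective Subtype.val_injective hh
  · rw [List.getLast?_map] at hl
    exact Option.map_injective Subtype.val_injective hl

theorem SimplyConnected.htpy_of_forall_mem (hP : SimplyConnected {x // P x}) (h : IsPath l a b)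
    (h' : IsPath l' a b) (hl : ∀ z ∈ l, P z) (hl' : ∀ z ∈ l', P z) : Htpy l l' := by
  have ha : P a := hl a (List.mem_of_mem_head? (isPath_iff.1 h).1)
  have hb : P b := hl b (List.mem_of_mem_getLast? (isPath_iff.1 h).2.1)
  have hL : IsPath (l.attachWith P hl) ⟨a, ha⟩ ⟨b, hb⟩ := .of_map_val (by simpa using h)
  have hL' : IsPath (l'.attachWith P hl') ⟨a, ha⟩ ⟨b, hb⟩ := .of_map_val (by simpa using h')
  simpa using (hP.htpy hL hL').map (Subtype.mono_coe P)

end Subtype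

section ConeMove

variable {E : Type*} [Preorder E] {l l' : List E} {a b : E}

def ConeMove (l l' : List E) : Prop :=
  ∃ (p q L L' : List E) (w₁ w₂ m : E), IsPath L w₁ w₂ ∧ IsPath L' w₁ w₂ ∧
    (∀ z ∈ L, m ≤ z) ∧ (∀ z ∈ L', m ≤ z) ∧ l = p ++ L ++ q ∧ l' = p ++ L' ++ q

instance : Std.Symm (@ConeMove E _) :=
  ⟨fun _ _ ⟨p, q, L, L', w₁, w₂, m, hL, hL', hm, hm', h, h'⟩ =>
    ⟨p, q, L', L, w₁, w₂, m, hL', hL, hm', hm, h', h⟩⟩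

theorem ConeMove.isPath (h : ConeMove l l') (hl : IsPath l a b) : IsPath l' a b := by
  obtain ⟨p, q, L, L', w₁, w₂, m, hL, hL', -, -, rfl, rfl⟩ := h
  exact hl.replace hL hL'

theorem Htpy.reflTransGen_coneMove (h : Htpy l l') : Relation.ReflTransGen ConeMove l l' := by
  induction h with
  | refl => exact .refl
  | symm _ ih => exact Std.Symm.symm _ _ ih
  | trans _ _ ih₁ ih₂ => exact ih₁.trans ih₂
  | up p q x y z hxy hyz =>
    refine .single ⟨p, q, [x, y, z], [x, z], x, z, x, ?_, ?_, ?_, ?_, by simp, by simp⟩ <;>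
      simp [isPath_iff, Comp, hxy, hyz, hxy.trans hyz]
  | down p q x y z hzy hyx =>
    refine .single ⟨p, q, [x, y, z], [x, z], x, z, z, ?_, ?_, ?_, ?_, by simp, by simp⟩ <;>
      simp [isPath_iff, Comp, hzy, hyx, hzy.trans hyx]
  | backforth p q x y hxy =>
    obtain ⟨m, hmx, hmy⟩ : ∃ m, m ≤ x ∧ m ≤ y := hxy.elim (⟨x, le_rfl, ·⟩) (⟨y, ·, le_rfl⟩)
    refine .single ⟨p, q, [x, y, x], [x], x, x, m, ?_, isPath_singleton x, ?_, ?_, by simp,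
      by simp⟩ <;> simp [isPath_iff, hxy, hxy.symm, hmx, hmy]

end ConeMove

section Lifts

variable {X Y : Type*} [Preorder X] [Preorder Y] {f : X → Y} {γ γ' γ'' γ₁ γ₁' γ₂ γ₂' : List Y}
  {δ : List X} {y y' y₁ y₂ m u v w : Y} {a b : X}

/-- `δ` runs from `a` through points `xᵢ` with `yᵢ ≤ f xᵢ` (`x₀ = a`), the segment from `xᵢ` to
`xᵢ₊₁` staying in the fibre `f⁻¹(Y_{≥ m})` over the smaller `m` of `yᵢ, yᵢ₊₁`, and ends with a
segment inside the fibre over the last vertex `yₙ`. -/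
inductive IsLift (f : X → Y) : List Y → List X → X → X → Prop
  | single {y : Y} {s : List X} {a b : X} :
      IsPath s a b → (∀ z ∈ s, y ≤ f z) → IsLift f [y] s a b
  | cons {y y' m : Y} {γ : List Y} {s δ : List X} {a x b : X} :
      γ.head? = some y' → IsLeast {y, y'} m → y ≤ f a → IsPath s a x → (∀ z ∈ s, m ≤ f z) →
      IsLift f γ δ x b → IsLift f (y :: γ) (s ++ δ.tail) a b

theorem IsLift.isPath (h : IsLift f γ δ a b) : IsPath δ a b := by
  induction h with
  | single hs => exact hs
  | cons _ _ _ hs _ _ ih => exact hs.append ih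

theorem IsLift.head_le (h : IsLift f (y :: γ) δ a b) : y ≤ f a := by
  cases h with
  | single hs hy => exact hy a (List.mem_of_mem_head? (isPath_iff.1 hs).1)
  | cons _ _ hya => exact hya

theorem IsLift.le_getLast (h : IsLift f γ δ a b) (hγ : γ.getLast? = some y) : y ≤ f b := by
  induction h with
  | single hs hy =>
    obtain rfl : _ = y := by simpa using hγ
    exact hy _ (List.mem_of_mem_getLast? (isPath_iff.1 hs).2.1)
  | cons hγh _ _ _ _ _ ih =>
    obtain ⟨t, rfl⟩ := List.head?_eq_some_iff.1 hγh
    exact ih (by simpa [List.getLast?_cons_cons] using hγ)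

theorem IsLift.forall_le (h : IsLift f γ δ a b) (hγ : ∀ w ∈ γ, m ≤ w) : ∀ z ∈ δ, m ≤ f z := by
  induction h with
  | single _ hy => exact fun z hz => (hγ _ (by simp)).trans (hy z hz)
  | cons hγh hm _ _ hs _ ih =>
    intro z hz
    rcases List.mem_append.1 hz with hz | hz
    · have : m ≤ _ := hm.1.elim (fun h => h ▸ hγ _ (by simp))
        (fun h => h ▸ hγ _ (List.mem_cons_of_mem _ (List.mem_of_mem_head? hγh)))
      exact this.trans (hs z hz)
    · exact ih (fun w hw => hγ w (List.mem_cons_of_mem _ hw)) z (List.mem_of_mem_tail hz)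

theorem IsLift.split (h : IsLift f (γ₁ ++ w :: γ₂) δ a b) :
    ∃ c δ₁ δ₂, IsLift f (γ₁ ++ [w]) δ₁ a c ∧ IsLift f (w :: γ₂) δ₂ c b ∧ δ = δ₁ ++ δ₂.tail := by
  induction γ₁ generalizing δ a with
  | nil => exact ⟨a, [a], δ, .single (isPath_singleton a) (by simpa using h.head_le), h,
      h.isPath.eq_cons⟩
  | cons y γ₁ ih =>
    rw [List.cons_append] at h
    generalize hγ : γ₁ ++ w :: γ₂ = γ at h
    cases h with
    | single => simp at hγ
    | cons hγh hm hya hs hsm hδ =>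
      subst hγ
      obtain ⟨c, δ₁, δ₂, hδ₁, hδ₂, rfl⟩ := ih hδ
      refine ⟨c, _, δ₂, .cons ?_ hm hya hs hsm hδ₁, hδ₂, ?_⟩
      · simpa [List.head?_append] using hγh
      · rw [List.tail_append_of_ne_nil hδ₁.isPath.ne_nil, List.append_assoc]

theorem isLift_exists (hne : ∀ y, Nonempty {x // y ≤ f x}) (hconn : ∀ y, Connected {x // y ≤ f x})
    (hγ : IsPath γ y₁ y₂) (ha : y₁ ≤ f a) (hb : y₂ ≤ f b) : ∃ δ, IsLift f γ δ a b := by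
  induction γ generalizing y₁ a with
  | nil => exact absurd rfl hγ.ne_nil
  | cons y γ ih =>
    obtain rfl := hγ.head_eq
    rcases γ with _ | ⟨y', γ⟩
    · obtain rfl : y = y₂ := by simpa [isPath_iff] using hγ
      obtain ⟨s, hs, hsy⟩ := (hconn y).exists_isPath_of_subtype ha hb
      exact ⟨s, .single hs hsy⟩
    · obtain ⟨x, hx⟩ := hne y'
      obtain ⟨δ, hδ⟩ := ih hγ.tail hx
      obtain ⟨m, hm⟩ := hγ.comp.exists_isLeast
      obtain ⟨s, hs, hsm⟩ := (hconn m).exists_isPath_of_subtype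
        ((hm.2 (by simp)).trans ha) ((hm.2 (by simp)).trans hx)
      exact ⟨_, .cons rfl hm ha hs hsm hδ⟩

theorem isLift_map (hf : Monotone f) (hδ : IsPath δ a b) : IsLift f (δ.map f) δ a b := by
  induction δ generalizing a with
  | nil => exact absurd rfl hδ.ne_nil
  | cons x δ ih =>
    obtain rfl := hδ.head_eq
    rcases δ with _ | ⟨x', δ⟩
    · obtain rfl : x = b := by simpa [isPath_iff] using hδ
      exact .single (isPath_singleton x) (by simp)
    · obtain ⟨m, hm⟩ := (hδ.comp.map hf).exists_isLeast
      have hs : IsPath [x, x'] x x' := (isPath_singleton x').cons hδ.comp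
      exact .cons rfl hm le_rfl hs (by simpa using ⟨hm.2 (by simp), hm.2 (by simp)⟩)
        (ih hδ.tail)

theorem htpy_of_isLeast (q : List Y) (hm : IsLeast {y, y'} m) (hu : y ≤ u) (hv : y' ≤ v) :
    Htpy (u :: m :: v :: y' :: q) (u :: y :: y' :: q) := by
  rcases hm.1 with rfl | rfl
  · have hmy' : m ≤ y' := hm.2 (by simp)
    exact (Htpy.up [u] (y' :: q) m y' v hmy' hv).symm.trans
      (Htpy.backforth [u, m] q y' v (Or.inl hv))
  · have hmy : m ≤ y := hm.2 (by simp)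
    exact (Htpy.backforth [u] q m v (Or.inl hv)).trans (Htpy.down [] q u y m hmy hu).symm

theorem IsLift.htpy_map (hf : Monotone f) (h : IsLift f γ δ a b) :
    Htpy (δ.map f) (f a :: (γ ++ [f b])) := by
  induction h with
  | single hs hy => exact (hs.map hf).htpy_of_forall_le (by simpa using hy)
  | @cons y y' m γ s δ a x b hγh hm hya hs hsm hδ ih =>
    obtain ⟨t, rfl⟩ := List.head?_eq_some_iff.1 hγh
    have hδf : IsPath (δ.map f) (f x) (f b) := hδ.isPath.map hf
    calc (s ++ δ.tail).map f = s.map f ++ (δ.map f).tail := by simp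
      Htpy _ ([f a, m, f x] ++ (δ.map f).tail) :=
        ((hs.map hf).htpy_of_forall_le (by simpa using hsm)).append_right _
      _ = [f a, m] ++ δ.map f := by rw [hδf.eq_cons]; simp
      Htpy _ ([f a, m] ++ f x :: (y' :: t ++ [f b])) := ih.append_left _
      Htpy _ (f a :: (y :: y' :: t ++ [f b])) := htpy_of_isLeast _ hm hya hδ.head_le

/-- Lifts of `γ` and `γ'` are homotopic once their endpoints are joined inside the fibres over
the common endpoints `y₁`, `y₂` of `γ` and `γ'`. -/
def LiftsHomotopic (f : X → Y) (y₁ y₂ : Y) (γ γ' : List Y) : Prop :=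
  ∀ ⦃δ δ' r t : List X⦄ ⦃a a' b b' : X⦄, IsLift f γ δ a b → IsLift f γ' δ' a' b' →
    IsPath r a a' → (∀ z ∈ r, y₁ ≤ f z) → IsPath t b b' → (∀ z ∈ t, y₂ ≤ f z) →
    Htpy (δ ++ t.tail) (r ++ δ'.tail)

theorem liftsHomotopic_of_forall_le (hm : SimplyConnected {x // m ≤ f x})
    (hγ : ∀ w ∈ γ, m ≤ w) (hγ' : ∀ w ∈ γ', m ≤ w) (h₁ : m ≤ y₁) (h₂ : m ≤ y₂) :
    LiftsHomotopic f y₁ y₂ γ γ' := by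
  intro δ δ' r t a a' b b' hδ hδ' hr hry₁ ht hty₂
  refine hm.htpy_of_forall_mem (hδ.isPath.append ht) (hr.append hδ'.isPath) ?_ ?_
  · intro z hz
    rcases List.mem_append.1 hz with hz | hz
    · exact hδ.forall_le hγ z hz
    · exact h₂.trans (hty₂ z (List.mem_of_mem_tail hz))
  · intro z hz
    rcases List.mem_append.1 hz with hz | hz
    · exact h₁.trans (hry₁ z hz)
    · exact hδ'.forall_le hγ' z (List.mem_of_mem_tail hz)

theorem LiftsHomotopic.append (hw : Connected {x // w ≤ f x})
    (h₁ : LiftsHomotopic f y₁ w (γ₁ ++ [w]) (γ₁' ++ [w]))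
    (h₂ : LiftsHomotopic f w y₂ (w :: γ₂) (w :: γ₂')) :
    LiftsHomotopic f y₁ y₂ (γ₁ ++ w :: γ₂) (γ₁' ++ w :: γ₂') := by
  intro δ δ' r t a a' b b' hδ hδ' hr hry₁ ht hty₂
  obtain ⟨c, δ₁, δ₂, hδ₁, hδ₂, rfl⟩ := hδ.split
  obtain ⟨c', δ₁', δ₂', hδ₁', hδ₂', rfl⟩ := hδ'.split
  obtain ⟨u, hu, huw⟩ := hw.exists_isPath_of_subtype hδ₂.head_le hδ₂'.head_le
  calc δ₁ ++ δ₂.tail ++ t.tail = δ₁.dropLast ++ (δ₂ ++ t.tail) := by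
        rw [hδ₁.isPath.append_tail_eq hδ₂.isPath, List.append_assoc]
    Htpy _ (δ₁.dropLast ++ (u ++ δ₂'.tail)) := (h₂ hδ₂ hδ₂' hu huw ht hty₂).append_left _
    _ = δ₁ ++ u.tail ++ δ₂'.tail := by rw [hδ₁.isPath.append_tail_eq hu, List.append_assoc]
    Htpy _ (r ++ δ₁'.tail ++ δ₂'.tail) := (h₁ hδ₁ hδ₁' hr hry₁ hu huw).append_right _
    _ = r ++ (δ₁' ++ δ₂'.tail).tail := by
        rw [List.tail_append_of_ne_nil hδ₁'.isPath.ne_nil, List.append_assoc]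

theorem liftsHomotopic_refl (hsc : ∀ y, SimplyConnected {x // y ≤ f x}) (hγ : IsPath γ y₁ y₂) :
    LiftsHomotopic f y₁ y₂ γ γ := by
  induction γ generalizing y₁ with
  | nil => exact absurd rfl hγ.ne_nil
  | cons y γ ih =>
    obtain rfl := hγ.head_eq
    rcases γ with _ | ⟨y', γ⟩
    · obtain rfl : y = y₂ := by simpa [isPath_iff] using hγ
      exact liftsHomotopic_of_forall_le (hsc y) (by simp) (by simp) le_rfl le_rfl
    · obtain ⟨m, hm⟩ := hγ.comp.exists_isLeast
      have hpair : LiftsHomotopic f y y' [y, y'] [y, y'] :=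
        liftsHomotopic_of_forall_le (hsc m) (by simpa using hm.2) (by simpa using hm.2)
          (hm.2 (by simp)) (hm.2 (by simp))
      exact hpair.append (hsc y').1 (γ₁ := [y]) (γ₁' := [y]) (ih hγ.tail)

theorem LiftsHomotopic.trans (hne : ∀ y, Nonempty {x // y ≤ f x})
    (hconn : ∀ y, Connected {x // y ≤ f x}) (hγ : IsPath γ y₁ y₂) (hγ' : IsPath γ' y₁ y₂)
    (h₁ : LiftsHomotopic f y₁ y₂ γ γ') (h₂ : LiftsHomotopic f y₁ y₂ γ' γ'') :
    LiftsHomotopic f y₁ y₂ γ γ'' := by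
  intro δ δ'' r t a a'' b b'' hδ hδ'' hr hry₁ ht hty₂
  have ha : y₁ ≤ f a := (hγ.eq_cons ▸ hδ).head_le
  have hb : y₂ ≤ f b := hδ.le_getLast (isPath_iff.1 hγ).2.1
  obtain ⟨δ', hδ'⟩ := isLift_exists hne hconn hγ' ha hb
  calc δ ++ t.tail = δ ++ [b].tail ++ t.tail := by simp
    Htpy _ ([a] ++ δ'.tail ++ t.tail) :=
      (h₁ hδ hδ' (isPath_singleton a) (by simpa) (isPath_singleton b) (by simpa)).append_right _
    _ = δ' ++ t.tail := by rw [hδ'.isPath.eq_cons]; rfl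
    Htpy _ (r ++ δ''.tail) := h₂ hδ' hδ'' hr hry₁ ht hty₂

theorem ConeMove.liftsHomotopic (hsc : ∀ y, SimplyConnected {x // y ≤ f x}) (h : ConeMove γ γ')
    (hγ : IsPath γ y₁ y₂) : LiftsHomotopic f y₁ y₂ γ γ' := by
  obtain ⟨p, q, L, L', w₁, w₂, m, hL, hL', hm, hm', rfl, rfl⟩ := h
  have hfront {K : List Y} (hK : IsPath K w₁ w₂) : p ++ K = p ++ w₁ :: K.tail := by
    rw [← hK.eq_cons]
  have hback {K : List Y} (hK : IsPath K w₁ w₂) : p ++ K = (p ++ K.dropLast) ++ [w₂] := by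
    rw [List.append_assoc, ← hK.eq_dropLast_append]
  have hp : IsPath (p ++ [w₁]) y₁ w₁ :=
    (isPath_append_cons_iff.1 (by rwa [hfront hL, List.append_assoc] at hγ)).1
  have hsplit {K : List Y} (hK : IsPath K w₁ w₂) : p ++ K ++ q = (p ++ K.dropLast) ++ w₂ :: q := by
    rw [hback hK]; simp
  have hq : IsPath (w₂ :: q) w₂ y₂ := (isPath_append_cons_iff.1 (hsplit hL ▸ hγ)).2
  have hcone : LiftsHomotopic f w₁ w₂ L L' :=
    liftsHomotopic_of_forall_le (hsc m) hm hm' (hm w₁ (List.mem_of_mem_head? (isPath_iff.1 hL).1))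
      (hm w₂ (List.mem_of_mem_getLast? (isPath_iff.1 hL).2.1))
  have hpre : LiftsHomotopic f y₁ w₂ (p ++ L) (p ++ L') := by
    rw [hfront hL, hfront hL']
    exact (liftsHomotopic_refl hsc hp).append (hsc w₁).1 (by rwa [← hL.eq_cons, ← hL'.eq_cons])
  rw [hback hL, hback hL'] at hpre
  rw [hsplit hL, hsplit hL']
  exact hpre.append (hsc w₂).1 (liftsHomotopic_refl hsc hq)

theorem Htpy.liftsHomotopic (hne : ∀ y, Nonempty {x // y ≤ f x})
    (hsc : ∀ y, SimplyConnected {x // y ≤ f x}) (h : Htpy γ γ') (hγ : IsPath γ y₁ y₂) :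
    LiftsHomotopic f y₁ y₂ γ γ' := by
  suffices IsPath γ' y₁ y₂ ∧ LiftsHomotopic f y₁ y₂ γ γ' from this.2
  have hmoves := h.reflTransGen_coneMove
  clear h
  induction hmoves with
  | refl => exact ⟨hγ, liftsHomotopic_refl hsc hγ⟩
  | tail _ hmove ih =>
    exact ⟨hmove.isPath ih.1, ih.2.trans hne (fun y => (hsc y).1) hγ ih.1
      (hmove.liftsHomotopic hsc ih.1)⟩

end Lifts

theorem stmt18_general {X Y : Type*} [PartialOrder X] [PartialOrder Y]
    (f : X → Y) (hf : Monotone f)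
    (hfib : ∀ y : Y, Nonempty {x : X // y ≤ f x} ∧ Connected {x : X // y ≤ f x}) :
    (∀ (x₀ : X) (γ : List Y), IsPath γ (f x₀) (f x₀) →
        ∃ δ : List X, IsPath δ x₀ x₀ ∧ Htpy (δ.map f) γ) ∧
    ((∀ y : Y, SimplyConnected {x : X // y ≤ f x}) →
      ∀ (x₀ : X) (δ δ' : List X), IsPath δ x₀ x₀ → IsPath δ' x₀ x₀ →
        Htpy (δ.map f) (δ'.map f) → Htpy δ δ') := by
  have hne := fun y => (hfib y).1
  refine ⟨fun x₀ γ hγ => ?_, fun hsc x₀ δ δ' hδ hδ' h => ?_⟩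
  · obtain ⟨δ, hδ⟩ := isLift_exists hne (fun y => (hfib y).2) hγ le_rfl le_rfl
    exact ⟨δ, hδ.isPath, (hδ.htpy_map hf).trans hγ.htpy_cons_append⟩
  · have := h.liftsHomotopic hne hsc (hδ.map hf) (isLift_map hf hδ) (isLift_map hf hδ')
      (isPath_singleton x₀) (by simp) (isPath_singleton x₀) (by simp)
    rwa [List.tail_cons, List.append_nil, List.singleton_append, ← hδ'.eq_cons] at this

/-- Bouc's lemma: let `f : X → Y` be an order preserving map of posets with `Y` connected such
that every `f⁻¹(Y_{≥y})` is nonempty and connected. Then the induced map on fundamental groups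
is surjective (every loop in `Y` is homotopic to the image of a loop in `X`); if moreover each
`f⁻¹(Y_{≥y})` is simply connected, it is an isomorphism (in addition, two loops in `X` whose
images are homotopic are homotopic). -/
theorem stmt18 {X Y : Type*} [PartialOrder X] [PartialOrder Y]
    (f : X → Y) (hf : Monotone f) (hY : Connected Y)
    (hfib : ∀ y : Y, Nonempty {x : X // y ≤ f x} ∧ Connected {x : X // y ≤ f x}) :
    (∀ (x₀ : X) (γ : List Y), IsPath γ (f x₀) (f x₀) →
        ∃ δ : List X, IsPath δ x₀ x₀ ∧ Htpy (δ.map f) γ) ∧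
    ((∀ y : Y, SimplyConnected {x : X // y ≤ f x}) →
      ∀ (x₀ : X) (δ δ' : List X), IsPath δ x₀ x₀ → IsPath δ' x₀ x₀ →
        Htpy (δ.map f) (δ'.map f) → Htpy δ δ') :=
  stmt18_general f hf hfib

end PosetHtpy
end
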